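/- arXiv:1402.4905 — 9 statements merged into one kernel-verified Lean document; each statement's English description precedes it below -/
import Mathlib

section
/- Let S be a numerical semigroup generated by a set G, and d a positive integer. For each d-partition λ = (λ_1,...,λ_m), let Γ_λ = {(g_{γ_1}+...+g_{γ_m})/d : g_{γ_i} ∈ G, g_{γ_i} ≡ λ_i (mod d) for all i}. Then the union Γ(S/d) of the sets Γ_λ over all d-partitions λ is a generating system of the numerical semigroup S/d = {x ∈ ℕ : dx ∈ S}. -/
def IsDPartition (d : ℕ) (m : Multiset ℕ) : Prop :=
  m ≠ 0 ∧ (∀ x ∈ m, x < d) ∧ d ∣ m.sum ∧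
    ∀ t : Multiset ℕ, t ≤ m → t ≠ 0 → t ≠ m → ¬ d ∣ t.sum

def Gamma (d : ℕ) (G : Set ℕ) : Set ℕ :=
  {x | ∃ l : List ℕ, (∀ g ∈ l, g ∈ G) ∧
    IsDPartition d ((l.map (fun g => g % d) : List ℕ) : Multiset ℕ) ∧ d * x = l.sum}

/-- Lift a sub-multiset of a mapped multiset. -/
lemma exists_le_of_le_map {α β : Type*} [DecidableEq β] {f : α → β} {s : Multiset α}
    {t : Multiset β} (h : t ≤ s.map f) : ∃ u ≤ s, u.map f = t := by
  induction s using Multiset.induction generalizing t with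
  | empty =>
    simp only [Multiset.map_zero, Multiset.le_zero] at h
    exact ⟨0, le_refl _, by simp [h]⟩
  | cons a s ih =>
    rw [Multiset.map_cons] at h
    by_cases hfa : f a ∈ t
    · have h1 : t.erase (f a) ≤ s.map f := Multiset.erase_le_iff_le_cons.mpr h
      obtain ⟨u, hu, hmu⟩ := ih h1
      exact ⟨a ::ₘ u, Multiset.cons_le_cons _ hu, by
        rw [Multiset.map_cons, hmu, Multiset.cons_erase hfa]⟩
    · have h1 : t ≤ s.map f := (Multiset.le_cons_of_notMem hfa).mp h
      obtain ⟨u, hu, hmu⟩ := ih h1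
      exact ⟨u, le_trans hu (Multiset.le_cons_self _ _), hmu⟩

lemma sum_mod_eq {d : ℕ} (m : Multiset ℕ) :
    (m.map (fun g => g % d)).sum % d = m.sum % d := by
  induction m using Multiset.induction with
  | empty => simp
  | cons a s ih =>
    simp only [Multiset.map_cons, Multiset.sum_cons]
    conv_rhs => rw [Nat.add_mod]
    rw [Nat.add_mod, Nat.mod_mod_of_dvd _ dvd_rfl, ih]

/-- main combinatorial lemma -/
lemma key {d : ℕ} (hd : 0 < d) {G : Set ℕ} :
    ∀ m : Multiset ℕ, (∀ g ∈ m, g ∈ G) → d ∣ m.sum →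
      m.sum / d ∈ AddSubmonoid.closure (Gamma d G) := by
  intro m
  induction m using Multiset.strongInductionOn with
  | _ m ih =>
  intro hG hdvd
  rcases eq_or_ne m 0 with rfl | hne
  · simpa using (AddSubmonoid.closure (Gamma d G)).zero_mem
  -- find minimal nonempty submultiset with sum divisible by d
  have hP : ∃ n, ∃ l ≤ m, l ≠ 0 ∧ d ∣ l.sum ∧ Multiset.card l = n :=
    ⟨Multiset.card m, m, le_refl _, hne, hdvd, rfl⟩
  classical
  obtain ⟨l, hlm, hl0, hld, hlcard⟩ := Nat.find_spec hP
  have hmin : ∀ t ≤ m, t ≠ 0 → d ∣ t.sum → Multiset.card l ≤ Multiset.card t := by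
    intro t htm ht0 htd
    rw [hlcard]
    by_contra hlt
    exact Nat.find_min hP (lt_of_not_ge hlt) ⟨t, htm, ht0, htd, rfl⟩
  -- l gives an element of Gamma
  have hx : l.sum / d ∈ Gamma d G := by
    refine ⟨l.toList, ?_, ?_, ?_⟩
    · intro g hg
      exact hG g (Multiset.mem_of_le hlm (by rwa [Multiset.mem_toList] at hg))
    · have hcoe : ((l.toList.map (fun g => g % d) : List ℕ) : Multiset ℕ)
          = l.map (fun g => g % d) := by
        rw [← Multiset.map_coe, Multiset.coe_toList]
      rw [hcoe]
      refine ⟨?_, ?_, ?_, ?_⟩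
      · simpa using hl0
      · intro x hx
        simp only [Multiset.mem_map] at hx
        obtain ⟨g, _, rfl⟩ := hx
        exact Nat.mod_lt _ hd
      · rw [Nat.dvd_iff_mod_eq_zero, sum_mod_eq, ← Nat.dvd_iff_mod_eq_zero]
        exact hld
      · intro t htl ht0 htne htd
        obtain ⟨u, hul, humap⟩ := exists_le_of_le_map htl
        have hu0 : u ≠ 0 := by
          intro h; rw [h] at humap; exact ht0 humap.symm
        have hud : d ∣ u.sum := by
          rw [Nat.dvd_iff_mod_eq_zero, ← sum_mod_eq, humap, ← Nat.dvd_iff_mod_eq_zero]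
          exact htd
        have hcard : Multiset.card l ≤ Multiset.card u :=
          hmin u (le_trans hul hlm) hu0 hud
        have heq : u = l := Multiset.eq_of_le_of_card_le hul hcard
        rw [heq] at humap
        exact htne humap.symm
    · rw [← Multiset.sum_toList l] at hld ⊢
      exact Nat.mul_div_cancel' hld
  -- induction on the rest
  have hrest : (m - l).sum / d ∈ AddSubmonoid.closure (Gamma d G) := by
    refine ih (m - l) ?_ (fun g hg => hG g (Multiset.mem_of_le (Multiset.sub_le_self _ _) hg)) ?_
    · refine lt_of_le_of_ne (Multiset.sub_le_self _ _) (fun h => ?_)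
      have h1 : Multiset.card (m - l) = Multiset.card m - Multiset.card l :=
        Multiset.card_sub hlm
      have h2 : 0 < Multiset.card l := Multiset.card_pos.mpr hl0
      have h3 : Multiset.card l ≤ Multiset.card m := Multiset.card_le_card hlm
      have h4 : Multiset.card (m - l) = Multiset.card m := by rw [h]
      omega
    · have hsum : (m - l).sum + l.sum = m.sum := by
        rw [← Multiset.sum_add, tsub_add_cancel_of_le hlm]
      have : (m - l).sum = m.sum - l.sum := by omega
      rw [this]
      exact Nat.dvd_sub hdvd hld
  have hsum : (m - l).sum + l.sum = m.sum := by
    rw [← Multiset.sum_add, tsub_add_cancel_of_le hlm]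
  have : m.sum / d = l.sum / d + (m - l).sum / d := by
    have hc : d ∣ (m - l).sum := by
      have h5 : (m - l).sum = m.sum - l.sum := by omega
      rw [h5]
      exact Nat.dvd_sub hdvd hld
    obtain ⟨a, ha⟩ := hld
    obtain ⟨c, hc⟩ := hc
    have hb : m.sum = d * (c + a) := by rw [← hsum, ha, hc]; ring
    rw [hb, ha, hc, Nat.mul_div_cancel_left _ hd, Nat.mul_div_cancel_left _ hd,
      Nat.mul_div_cancel_left _ hd]
    omega
  rw [this]
  exact AddSubmonoid.add_mem _ (AddSubmonoid.subset_closure hx) hrest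

theorem stmt8 (d : ℕ) (hd : 0 < d) (G : Set ℕ) (S : AddSubmonoid ℕ)
    (hfin : {n : ℕ | n ∉ S}.Finite) (hSG : S = AddSubmonoid.closure G) :
    (AddSubmonoid.closure (Gamma d G) : Set ℕ) = {x : ℕ | d * x ∈ S} := by
  subst hSG
  apply le_antisymm
  · -- closure Gamma ⊆ {x | d*x ∈ closure G}
    intro x hx
    have : x ∈ AddSubmonoid.closure (Gamma d G) := hx
    -- the target set is a submonoid
    let T : AddSubmonoid ℕ :=
      { carrier := {x : ℕ | d * x ∈ AddSubmonoid.closure G}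
        zero_mem' := by
          simpa using (AddSubmonoid.closure G).zero_mem
        add_mem' := fun {a b} ha hb => by
          simp only [Set.mem_setOf_eq, mul_add] at *
          exact AddSubmonoid.add_mem _ ha hb }
    have hsub : Gamma d G ⊆ T := by
      intro y hy
      obtain ⟨l, hlG, _, hsum⟩ := hy
      show d * y ∈ AddSubmonoid.closure G
      rw [hsum]
      exact AddSubmonoid.list_sum_mem _ (fun g hg => AddSubmonoid.subset_closure (hlG g hg))
    exact AddSubmonoid.closure_le.mpr hsub this
  · intro x hx
    simp only [Set.mem_setOf_eq] at hx
    obtain ⟨m, hmG, hmsum⟩ := AddSubmonoid.exists_multiset_of_mem_closure hx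
    have hdvd : d ∣ m.sum := ⟨x, by omega⟩
    have := key hd m hmG hdvd
    have hx' : m.sum / d = x := by
      rw [hmsum, Nat.mul_div_cancel_left _ hd]
    rwa [hx'] at this
end

section
/- For S = ⟨7,9,13⟩ and d = 3, the element 13 belongs to Γ(S/3) but is not a minimal generator of S/3, since 3 ∈ S/3, 7 ∈ S/3, and 13 = 7 + 3·2; hence Γ(S/d) need not be a minimal generating set. -/
theorem stmt10 :
    13 ∈ Gamma 3 ({7, 9, 13} : Set ℕ) ∧
      3 ∈ {x : ℕ | 3 * x ∈ AddSubmonoid.closure ({7, 9, 13} : Set ℕ)} ∧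
      7 ∈ {x : ℕ | 3 * x ∈ AddSubmonoid.closure ({7, 9, 13} : Set ℕ)} ∧
      (13 : ℕ) = 7 + 3 * 2 ∧
      ∃ a b : ℕ, a ∈ {x : ℕ | 3 * x ∈ AddSubmonoid.closure ({7, 9, 13} : Set ℕ)} ∧
        b ∈ {x : ℕ | 3 * x ∈ AddSubmonoid.closure ({7, 9, 13} : Set ℕ)} ∧
        a ≠ 0 ∧ b ≠ 0 ∧ 13 = a + b := by
  have h7 : (7:ℕ) ∈ AddSubmonoid.closure ({7, 9, 13} : Set ℕ) :=
    AddSubmonoid.subset_closure (by simp)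
  have h9 : (9:ℕ) ∈ AddSubmonoid.closure ({7, 9, 13} : Set ℕ) :=
    AddSubmonoid.subset_closure (by simp)
  refine ⟨?_, ?_, ?_, by norm_num, 7, 6, ?_, ?_, by norm_num, by norm_num, by norm_num⟩
  · refine ⟨[13, 13, 13], by norm_num, ⟨by decide, by decide, by decide, ?_⟩, by norm_num⟩
    intro t ht ht0 htm hdvd
    have hmem : ∀ x ∈ t, x = 1 := by
      intro x hx
      have := Multiset.mem_of_le ht hx
      simpa using this
    have hsum : t.sum = Multiset.card t := by
      rw [Multiset.eq_replicate_card.mpr hmem]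
      simp
    have hcard : Multiset.card t ≤ 3 := by
      have := Multiset.card_le_card ht
      simpa using this
    have h1 : Multiset.card t ≠ 0 := by simpa using ht0
    have h3 : Multiset.card t ≠ 3 := by
      intro h
      exact htm (Multiset.eq_of_le_of_card_le ht (by simp [h]))
    rw [hsum] at hdvd
    omega
  · simp only [Set.mem_setOf_eq]
    have : (3:ℕ) * 3 = 9 := by norm_num
    rw [this]; exact h9
  · simp only [Set.mem_setOf_eq]
    have : (3:ℕ) * 7 = 7 + 7 + 7 := by norm_num
    rw [this]; exact add_mem (add_mem h7 h7) h7
  · simp only [Set.mem_setOf_eq]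
    have : (3:ℕ) * 7 = 7 + 7 + 7 := by norm_num
    rw [this]; exact add_mem (add_mem h7 h7) h7
  · simp only [Set.mem_setOf_eq]
    have : (3:ℕ) * 6 = 9 + 9 := by norm_num
    rw [this]; exact add_mem h9 h9
end

section
/- Let S be a numerical semigroup with minimal generating set G partitioned into residue classes G_i = {g ∈ G : g ≡ i (mod d)} for 0 ≤ i ≤ d−1. Then the embedding dimension of S/d is at most the sum over all d-partitions λ of ∏_{i=0}^{d−1} C(|G_i| + φ_λ(i) − 1, φ_λ(i)). -/
def minGens (T : Set ℕ) : Set ℕ :=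
  {x | x ∈ T ∧ x ≠ 0 ∧ ∀ a b : ℕ, a ∈ T → b ∈ T → a ≠ 0 → b ≠ 0 → x ≠ a + b}

lemma isdp_iff (d : ℕ) (m : Multiset ℕ) : IsDPartition d m ↔ (m ≠ 0 ∧ (∀ x ∈ m, x < d) ∧
    d ∣ m.sum ∧ ∀ t : Multiset ℕ, t ≤ m → t ≠ 0 → t ≠ m → ¬ d ∣ t.sum) := Iff.rfl

lemma aux_lift {f : ℕ → ℕ} {s t : Multiset ℕ} (h : t ≤ s.map f) :
    ∃ u, u ≤ s ∧ u.map f = t := by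
  induction s using Quotient.inductionOn with
  | _ l =>
    induction t using Quotient.inductionOn with
    | _ lt =>
      rw [Multiset.quot_mk_to_coe, Multiset.quot_mk_to_coe, Multiset.map_coe,
        Multiset.coe_le] at h
      obtain ⟨l', hp, hs⟩ := h
      obtain ⟨u, hu, rfl⟩ := List.sublist_map_iff.mp hs
      exact ⟨u, Multiset.coe_le.mpr hu.subperm, by
        rw [Multiset.quot_mk_to_coe, Multiset.map_coe]; exact Quot.sound hp⟩

lemma card_dpart_le {d : ℕ} (hd : 0 < d) {m : Multiset ℕ} (h : IsDPartition d m) :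
    Multiset.card m ≤ d := by
  by_contra hc
  push_neg at hc
  set l := m.toList with hl
  have hlm : (l : Multiset ℕ) = m := m.coe_toList
  have hlen' : l.length = Multiset.card m := m.length_toList
  have hlen : d + 1 ≤ l.length := by omega
  obtain ⟨i, j, hij, hfeq⟩ := Fintype.exists_ne_map_eq_of_card_lt
    (fun i : Fin (d + 1) => (⟨(l.take i).sum % d, Nat.mod_lt _ hd⟩ : Fin d)) (by simp)
  wlog hlt : (i : ℕ) < (j : ℕ) generalizing i j
  · exact this j i hij.symm hfeq.symm (by omega)
  set t : Multiset ℕ := (((l.drop (i:ℕ)).take ((j:ℕ) - (i:ℕ)) : List ℕ) : Multiset ℕ) with ht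
  have htle : t ≤ m := by
    rw [← hlm]
    exact Multiset.coe_le.mpr ((List.take_sublist _ _).trans (List.drop_sublist _ _)).subperm
  have hcardt : Multiset.card t = min ((j:ℕ) - (i:ℕ)) (l.length - (i:ℕ)) := by
    simp [ht, List.length_take, List.length_drop]
  have ht0 : t ≠ 0 := by
    intro h0
    rw [h0] at hcardt
    simp at hcardt
    omega
  have htm : t ≠ m := by
    intro he
    have := congrArg Multiset.card he
    rw [hcardt, ← hlm] at this
    simp at this
    omega
  have hsum : (l.take j).sum = (l.take i).sum + t.sum := by
    have : l.take j = l.take (i:ℕ) ++ (l.drop (i:ℕ)).take ((j:ℕ) - (i:ℕ)) := by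
      rw [← List.take_add]
      congr 1
      omega
    rw [this, List.sum_append]
    simp [ht]
  have hmod : (l.take i).sum % d = (l.take j).sum % d := by
    have := congrArg (fun x : Fin d => (x : ℕ)) hfeq
    simpa using this
  have hdvd : d ∣ t.sum := by
    have : ((l.take i).sum + t.sum) % d = ((l.take i).sum + 0) % d := by
      rw [add_zero, ← hsum, ← hmod]
    have h2 : t.sum ≡ 0 [MOD d] := Nat.ModEq.add_left_cancel' _ this
    exact (Nat.modEq_zero_iff_dvd).mp h2
  exact h.2.2.2 t htle ht0 htm hdvd

lemma dvd_sum_map_iff {d : ℕ} (M : Multiset ℕ) : d ∣ (M.map (· % d)).sum ↔ d ∣ M.sum := by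
  rw [Nat.dvd_iff_mod_eq_zero, Nat.dvd_iff_mod_eq_zero, ← Multiset.sum_nat_mod]

lemma extract {d : ℕ} (hd : 0 < d) (n : ℕ) :
    ∀ M : Multiset ℕ, Multiset.card M ≤ n → M ≠ 0 → d ∣ M.sum →
    ∃ N, N ≤ M ∧ N ≠ 0 ∧ IsDPartition d (N.map (· % d)) := by
  induction n with
  | zero =>
    intro M hc h0 _
    exact absurd (Multiset.card_eq_zero.mp (Nat.le_zero.mp hc)) h0
  | succ n ih =>
    intro M hc h0 hdvd
    by_cases H : ∃ t, t ≤ M.map (· % d) ∧ t ≠ 0 ∧ t ≠ M.map (· % d) ∧ d ∣ t.sum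
    · obtain ⟨t, ht, ht0, htne, htd⟩ := H
      obtain ⟨N, hNM, hNt⟩ := aux_lift ht
      have hN0 : N ≠ 0 := by
        rintro rfl
        rw [Multiset.map_zero] at hNt
        exact ht0 hNt.symm
      have hcard : Multiset.card N < Multiset.card M := by
        have h1 : Multiset.card N ≤ Multiset.card M :=
          Multiset.card_le_card hNM
        rcases h1.lt_or_eq with h | h
        · exact h
        · exfalso
          apply htne
          rw [← hNt]
          have : N = M := Multiset.eq_of_le_of_card_le hNM h.ge
          rw [this]
      have hNd : d ∣ N.sum := by
        rw [← dvd_sum_map_iff, hNt]; exact htd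
      obtain ⟨N', h1, h2, h3⟩ := ih N (by omega) hN0 hNd
      exact ⟨N', h1.trans hNM, h2, h3⟩
    · push_neg at H
      refine ⟨M, le_rfl, h0, (isdp_iff _ _).mpr ⟨?_, ?_, ?_, ?_⟩⟩
      · simpa using h0
      · intro x hx
        obtain ⟨a, _, rfl⟩ := Multiset.mem_map.mp hx
        exact Nat.mod_lt _ hd
      · exact (dvd_sum_map_iff M).mpr hdvd
      · exact fun t h1 h2 h3 => H t h1 h2 h3

lemma finite_le_multiset (M0 : Multiset ℕ) : {m : Multiset ℕ | m ≤ M0}.Finite :=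
  Set.Finite.subset (M0.powerset.finite_toSet) (fun m hm => by
    simpa [Multiset.mem_powerset] using hm)

lemma finite_bounded (H : Finset ℕ) (k : ℕ) :
    {m : Multiset ℕ | (∀ x ∈ m, x ∈ H) ∧ Multiset.card m ≤ k}.Finite := by
  apply Set.Finite.subset (finite_le_multiset (k • H.val))
  intro m hm
  obtain ⟨hmem, hcard⟩ := hm
  refine Multiset.le_iff_count.mpr fun a => ?_
  rw [Multiset.count_nsmul]
  by_cases ha : a ∈ m
  · have h1 : Multiset.count a H.val = 1 :=
      Multiset.count_eq_one_of_mem H.nodup (hmem a ha)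
    rw [h1, mul_one]
    exact (Multiset.count_le_card a m).trans hcard
  · simp [Multiset.count_eq_zero_of_notMem ha]

lemma fiber_bound (d : ℕ) (hd : 0 < d) (G : Finset ℕ) (lam : Multiset ℕ)
    (s : Finset (Multiset ℕ))
    (hs : ∀ M ∈ s, (∀ g ∈ M, g ∈ G) ∧ M.map (· % d) = lam) :
    s.card ≤ ∏ i ∈ Finset.range d,
      Nat.choose ((G.filter (fun g => g % d = i)).card + Multiset.count i lam - 1)
        (Multiset.count i lam) := by
  classical
  have hcardfilter : ∀ (M : Multiset ℕ), M.map (· % d) = lam → ∀ i : ℕ,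
      Multiset.card (M.filter (fun g => g % d = i)) = Multiset.count i lam := by
    intro M hM i
    rw [← hM, Multiset.count_map]
    congr 1
    exact Multiset.filter_congr (fun g _ => by constructor <;> (intro h; omega))
  set F : ∀ (_ : {M // M ∈ s}) (i : Fin d), Sym {g : ℕ // g ∈ G.filter (fun g => g % d = (i : ℕ))}
      (Multiset.count (i : ℕ) lam) := fun M i =>
    ⟨(Multiset.filter (fun g => g % d = (i : ℕ)) M.1).attach.map
      (fun g => (⟨g.1, by
        have hg := g.2
        rw [Multiset.mem_filter] at hg
        exact Finset.mem_filter.mpr ⟨(hs M.1 M.2).1 g.1 hg.1, hg.2⟩⟩ :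
          {g : ℕ // g ∈ G.filter (fun g => g % d = (i : ℕ))})),
     by rw [Multiset.card_map, Multiset.card_attach]
        exact hcardfilter M.1 (hs M.1 M.2).2 i⟩ with hF
  have hFrec : ∀ (M : {M // M ∈ s}) (i : Fin d),
      Multiset.map Subtype.val ((F M i) : Multiset {g : ℕ // g ∈ G.filter (fun g => g % d = (i : ℕ))})
        = Multiset.filter (fun g => g % d = (i : ℕ)) M.1 := by
    intro M i
    show Multiset.map _ (Multiset.map _ _) = _
    rw [Multiset.map_map]
    exact Multiset.attach_map_val _
  have hFinj : Function.Injective F := by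
    intro M M' h
    apply Subtype.ext
    ext a
    have hi : a % d < d := Nat.mod_lt _ hd
    have h1 := hFrec M ⟨a % d, hi⟩
    have h2 := hFrec M' ⟨a % d, hi⟩
    rw [h, h2] at h1
    have := congrArg (Multiset.count a) h1
    simpa [Multiset.count_filter] using this.symm
  have hle := Fintype.card_le_of_injective F hFinj
  rw [Fintype.card_coe] at hle
  refine hle.trans ?_
  rw [Fintype.card_pi]
  rw [← Fin.prod_univ_eq_prod_range (fun i => Nat.choose
      ((G.filter (fun g => g % d = i)).card + Multiset.count i lam - 1) (Multiset.count i lam)) d]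
  refine le_of_eq (Finset.prod_congr rfl fun i _ => ?_)
  rw [Sym.card_sym_eq_choose, Fintype.card_coe]

theorem stmt12 (d : ℕ) (hd : 0 < d) (G : Finset ℕ) (S : AddSubmonoid ℕ)
    (hfin : {n : ℕ | n ∉ S}.Finite) (hSG : S = AddSubmonoid.closure (G : Set ℕ))
    (hmin : ∀ g ∈ G, (g : ℕ) ∉ AddSubmonoid.closure ((G : Set ℕ) \ {g})) :
    Set.ncard (minGens {x : ℕ | d * x ∈ S})
      ≤ ∑ᶠ lam ∈ {m : Multiset ℕ | IsDPartition d m},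
          ∏ i ∈ Finset.range d,
            Nat.choose ((G.filter (fun g => g % d = i)).card + Multiset.count i lam - 1)
              (Multiset.count i lam) := by
  classical
  set T : Set ℕ := {x : ℕ | d * x ∈ S} with hT
  have hG0 : (0 : ℕ) ∉ G := by
    intro h0
    have h1 : (0 : ℕ) ∈ AddSubmonoid.closure ((G : Set ℕ) \ {(0:ℕ)}) := zero_mem _
    exact hmin 0 h0 h1
  have hmemS : ∀ x : ℕ, x ∈ S → ∃ M : Multiset ℕ, (∀ g ∈ M, g ∈ G) ∧ M.sum = x := by
    intro x hx
    rw [hSG] at hx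
    obtain ⟨M, h1, h2⟩ := AddSubmonoid.exists_multiset_of_mem_closure hx
    exact ⟨M, fun g hg => h1 g hg, h2⟩
  have hsummem : ∀ M : Multiset ℕ, (∀ g ∈ M, g ∈ G) → M.sum ∈ S := by
    intro M hM
    refine multiset_sum_mem M (fun g hg => ?_)
    rw [hSG]
    exact AddSubmonoid.subset_closure (hM g hg)
  have key : ∀ x ∈ minGens T, ∃ M : Multiset ℕ,
      (∀ g ∈ M, g ∈ G) ∧ IsDPartition d (M.map (· % d)) ∧ M.sum = d * x := by
    intro x hx
    obtain ⟨hxT, hx0, hxmin⟩ := hx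
    obtain ⟨M0, hM0G, hM0sum⟩ := hmemS _ hxT
    have hM00 : M0 ≠ 0 := by
      rintro rfl
      rw [Multiset.sum_zero] at hM0sum
      have : d * x ≠ 0 := Nat.mul_ne_zero (by omega) hx0
      exact this hM0sum.symm
    obtain ⟨N, hNM0, hN0, hNisdp⟩ :=
      extract hd (Multiset.card M0) M0 le_rfl hM00 ⟨x, hM0sum⟩
    have hNG : ∀ g ∈ N, g ∈ G := fun g hg => hM0G g (Multiset.mem_of_le hNM0 hg)
    have hNd : d ∣ N.sum := (dvd_sum_map_iff N).mp ((isdp_iff _ _).mp hNisdp).2.2.1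
    obtain ⟨y, hy⟩ := hNd
    have hyT : y ∈ T := by
      show d * y ∈ S
      rw [← hy]
      exact hsummem N hNG
    have hy0 : y ≠ 0 := by
      rintro rfl
      obtain ⟨g, hg⟩ := Multiset.exists_mem_of_ne_zero hN0
      have hgpos : 0 < g := Nat.pos_of_ne_zero (fun h => hG0 (h ▸ hNG g hg))
      have hle := Multiset.single_le_sum (fun x _ => Nat.zero_le x) g hg
      rw [hy] at hle
      omega
    obtain ⟨K, hK⟩ := Multiset.le_iff_exists_add.mp hNM0
    have hKG : ∀ g ∈ K, g ∈ G := fun g hg => hM0G g (by rw [hK]; exact Multiset.mem_add.mpr (Or.inr hg))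
    have hKsum : d * x = d * y + K.sum := by
      rw [← hM0sum, hK, Multiset.sum_add, hy]
    have hyx : y ≤ x := Nat.le_of_mul_le_mul_left (by omega) hd
    have hdist : d * (x - y) + d * y = d * x := by
      rw [← Nat.mul_add]
      congr 1
      omega
    have hxmy : x - y ∈ T := by
      show d * (x - y) ∈ S
      have : d * (x - y) = K.sum := by omega
      rw [this]
      exact hsummem K hKG
    have hxy : x = y := by
      by_contra hne
      have hxy0 : x - y ≠ 0 := by
        intro h
        apply hne
        omega
      exact hxmin y (x - y) hyT hxmy hy0 hxy0 (by omega)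
    exact ⟨N, hNG, hNisdp, by rw [hy, hxy]⟩
  set P : Set (Multiset ℕ) := {m : Multiset ℕ | IsDPartition d m} with hP
  have hPfin : P.Finite := by
    apply Set.Finite.subset (finite_bounded (Finset.range d) d)
    intro m hm
    have hm' := (isdp_iff _ _).mp hm
    exact ⟨fun x hx => Finset.mem_range.mpr (hm'.2.1 x hx), card_dpart_le hd hm⟩
  set B : Set (Multiset ℕ) := {M : Multiset ℕ | (∀ g ∈ M, g ∈ G) ∧ IsDPartition d (M.map (· % d))}
    with hB
  have hBfin : B.Finite := by
    apply Set.Finite.subset (finite_bounded G d)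
    intro M hM
    refine ⟨hM.1, ?_⟩
    have := card_dpart_le hd hM.2
    rwa [Multiset.card_map] at this
  set f : ℕ → Multiset ℕ := fun x => if h : ∃ M : Multiset ℕ,
      (∀ g ∈ M, g ∈ G) ∧ IsDPartition d (M.map (· % d)) ∧ M.sum = d * x then h.choose else 0
    with hf
  have hf1 : ∀ x ∈ minGens T, f x ∈ B ∧ (f x).sum = d * x := by
    intro x hx
    have h := key x hx
    rw [hf]
    simp only [dif_pos h]
    exact ⟨⟨h.choose_spec.1, h.choose_spec.2.1⟩, h.choose_spec.2.2⟩
  have step1 : (minGens T).ncard ≤ B.ncard := by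
    refine Set.ncard_le_ncard_of_injOn f (fun a ha => (hf1 a ha).1) ?_ hBfin
    intro a ha b hb hab
    have h1 := (hf1 a ha).2
    rw [hab, (hf1 b hb).2] at h1
    exact Nat.eq_of_mul_eq_mul_left hd h1.symm
  set Bf := hBfin.toFinset with hBf
  set Pf := hPfin.toFinset with hPf
  have hBncard : B.ncard = Bf.card := Set.ncard_eq_toFinset_card B hBfin
  have hmap : ∀ M ∈ Bf, M.map (· % d) ∈ Pf := by
    intro M hM
    rw [hBf, Set.Finite.mem_toFinset] at hM
    rw [hPf, Set.Finite.mem_toFinset]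
    exact hM.2
  have step2 : Bf.card = ∑ lam ∈ Pf, (Bf.filter (fun M => M.map (· % d) = lam)).card :=
    Finset.card_eq_sum_card_fiberwise hmap
  have step3 : ∀ lam ∈ Pf, (Bf.filter (fun M => M.map (· % d) = lam)).card ≤
      ∏ i ∈ Finset.range d,
        Nat.choose ((G.filter (fun g => g % d = i)).card + Multiset.count i lam - 1)
          (Multiset.count i lam) := by
    intro lam _
    refine fiber_bound d hd G lam _ (fun M hM => ?_)
    rw [Finset.mem_filter, hBf, Set.Finite.mem_toFinset] at hM
    exact ⟨hM.1.1, hM.2⟩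
  have hfs : ∑ᶠ lam ∈ P, (∏ i ∈ Finset.range d,
        Nat.choose ((G.filter (fun g => g % d = i)).card + Multiset.count i lam - 1)
          (Multiset.count i lam))
      = ∑ lam ∈ Pf, ∏ i ∈ Finset.range d,
        Nat.choose ((G.filter (fun g => g % d = i)).card + Multiset.count i lam - 1)
          (Multiset.count i lam) := by
    rw [← Set.Finite.coe_toFinset hPfin, finsum_mem_coe_finset]
  calc (minGens T).ncard ≤ B.ncard := step1
    _ = Bf.card := hBncard
    _ = ∑ lam ∈ Pf, (Bf.filter (fun M => M.map (· % d) = lam)).card := step2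
    _ ≤ ∑ lam ∈ Pf, ∏ i ∈ Finset.range d,
        Nat.choose ((G.filter (fun g => g % d = i)).card + Multiset.count i lam - 1)
          (Multiset.count i lam) := Finset.sum_le_sum step3
    _ = _ := hfs.symm
end

section
/- For a positive integer d ≥ 2, the numerical semigroup S_d = ⟨d+1, d², d²+2d, d²+3d, ..., d²+(d−1)d⟩ satisfies S_d/d = {0} ∪ {n ∈ ℕ : n ≥ d}, and hence ν(S_d/d) = d. -/
def semigroupS (d : ℕ) : AddSubmonoid ℕ :=
  AddSubmonoid.closure ({d + 1} ∪ {x | ∃ k, k < d ∧ k ≠ 1 ∧ x = d ^ 2 + k * d})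

lemma exists_eq_of_mem_semigroupS {d s : ℕ} (hs : s ∈ semigroupS d) :
    ∃ a y, s = a * (d + 1) + d * y ∧ (y = 0 ∨ d ≤ y) := by
  induction hs using AddSubmonoid.closure_induction with
  | mem g hg =>
    rcases hg with rfl | ⟨k, -, -, rfl⟩
    · exact ⟨1, 0, by ring, Or.inl rfl⟩
    · exact ⟨0, d + k, by ring, Or.inr (by omega)⟩
  | zero => exact ⟨0, 0, by ring, Or.inl rfl⟩
  | add s t _ _ ihs iht =>
    obtain ⟨a, y, rfl, hy⟩ := ihs
    obtain ⟨b, z, rfl, hz⟩ := iht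
    exact ⟨a + b, y + z, by ring, by omega⟩

lemma mul_mem_semigroupS_of_le {d x : ℕ} (hdx : d ≤ x) : d * x ∈ semigroupS d := by
  rcases Nat.eq_zero_or_pos d with rfl | hd
  · simp
  have gen {g : ℕ} (hg : g ∈ ({d + 1} ∪ {x | ∃ k, k < d ∧ k ≠ 1 ∧ x = d ^ 2 + k * d})) :
      g ∈ semigroupS d :=
    AddSubmonoid.subset_closure hg
  have hsq : d ^ 2 ∈ semigroupS d := gen (Or.inr ⟨0, hd, zero_ne_one, by ring⟩)
  obtain ⟨q, r, hr, rfl⟩ : ∃ q r, r < d ∧ x = d + (d * q + r) :=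
    ⟨(x - d) / d, (x - d) % d, Nat.mod_lt _ hd, by rw [Nat.div_add_mod]; omega⟩
  by_cases hr1 : r = 1
  · subst hr1
    have h : d * (d + (d * q + 1)) = d • (d + 1) + q • d ^ 2 := by simp only [smul_eq_mul]; ring
    exact h ▸ add_mem (nsmul_mem (gen (Or.inl rfl)) d) (nsmul_mem hsq q)
  · have h : d * (d + (d * q + r)) = (d ^ 2 + r * d) + q • d ^ 2 := by
      simp only [smul_eq_mul]; ring
    exact h ▸ add_mem (gen (Or.inr ⟨r, hr, hr1, rfl⟩)) (nsmul_mem hsq q)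

lemma mul_mem_semigroupS_iff {d x : ℕ} (hd : 0 < d) :
    d * x ∈ semigroupS d ↔ x = 0 ∨ d ≤ x := by
  refine ⟨fun hx => ?_, ?_⟩
  · obtain ⟨a, y, heq, hy⟩ := exists_eq_of_mem_semigroupS hx
    have hda : d ∣ a := by
      have h : d * x = d * (a + y) + a := by rw [heq]; ring
      exact (Nat.dvd_add_right (dvd_mul_right d (a + y))).mp (h ▸ dvd_mul_right d x)
    obtain ⟨a, rfl⟩ := hda
    have hx : x = a * (d + 1) + y :=
      Nat.eq_of_mul_eq_mul_left hd (by rw [heq]; ring)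
    rcases Nat.eq_zero_or_pos a with rfl | ha
    · omega
    · have := Nat.le_mul_of_pos_left (d + 1) ha
      omega
  · rintro (rfl | hdx)
    · simp
    · exact mul_mem_semigroupS_of_le hdx

lemma minGens_zero_union_Ici {d : ℕ} (hd : 0 < d) :
    minGens ({0} ∪ {n | d ≤ n}) = Set.Ico d (2 * d) := by
  ext x
  simp only [minGens, Set.mem_ofPred_eq, Set.mem_union, Set.mem_singleton_iff, Set.mem_Ico]
  constructor
  · rintro ⟨hxT, hx0, hmin⟩
    refine ⟨by omega, not_le.mp fun h => ?_⟩
    exact hmin d (x - d) (Or.inr le_rfl) (Or.inr (by omega)) (by omega) (by omega) (by omega)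
  · rintro ⟨h1, h2⟩
    refine ⟨Or.inr h1, by omega, ?_⟩
    rintro a b (rfl | ha) (rfl | hb) ha0 hb0 rfl <;> omega

lemma ncard_minGens_zero_union_Ici {d : ℕ} (hd : 0 < d) :
    (minGens ({0} ∪ {n | d ≤ n})).ncard = d := by
  rw [minGens_zero_union_Ici hd, ← Finset.coe_Ico, Set.ncard_coe_finset, Nat.card_Ico]
  omega

theorem stmt13 (d : ℕ) (hd : 2 ≤ d) :
    {x : ℕ | d * x ∈ AddSubmonoid.closure
        (({d + 1} ∪ {x | ∃ k, k < d ∧ k ≠ 1 ∧ x = d ^ 2 + k * d}) : Set ℕ)}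
      = ({0} ∪ {n : ℕ | d ≤ n}) ∧
    Set.ncard (minGens {x : ℕ | d * x ∈ AddSubmonoid.closure
        (({d + 1} ∪ {x | ∃ k, k < d ∧ k ≠ 1 ∧ x = d ^ 2 + k * d}) : Set ℕ)}) = d := by
  have hquot : {x : ℕ | d * x ∈ semigroupS d} = {0} ∪ {n : ℕ | d ≤ n} := by
    ext x
    simpa using mul_mem_semigroupS_iff (x := x) (by omega : 0 < d)
  exact ⟨hquot, hquot ▸ ncard_minGens_zero_union_Ici (by omega)⟩
end

section
/- Let S be a numerical semigroup with embedding dimension ν(S), and let d be a positive integer. Then the embedding dimension of S/d satisfies ν(S/d) ≤ C(ν(S)+d−1, d), the binomial coefficient counting multisets of size d from ν(S) elements. -/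
namespace List

theorem exists_sublist_length_le_dvd_sum {d : ℕ} (hd : 0 < d) {l : List ℕ}
    (hl : d ≤ l.length) : ∃ l', l'.Sublist l ∧ l' ≠ [] ∧ l'.length ≤ d ∧ d ∣ l'.sum := by
  obtain ⟨i, hi, j, hj, hne, hmod⟩ :=
    Finset.exists_ne_map_eq_of_card_lt_of_maps_to (s := Finset.range (d + 1))
      (t := Finset.range d) (f := fun i => (l.take i).sum % d) (by simp)
      (fun i _ => by simpa using Nat.mod_lt _ hd)
  simp only [Finset.mem_range] at hi hj
  wlog hij : i < j generalizing i j
  · exact this j i hne.symm hmod.symm hj hi (by omega)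
  refine ⟨(l.take j).drop i, (drop_sublist _ _).trans (take_sublist _ _), ?_, ?_, ?_⟩
  · simp only [ne_eq, drop_eq_nil_iff, length_take]
    omega
  · simp only [length_drop, length_take]
    omega
  · have hsplit : (l.take j).sum = (l.take i).sum + ((l.take j).drop i).sum := by
      have : l.take i = (l.take j).take i := by rw [take_take, min_eq_left hij.le]
      rw [this, ← sum_append, take_append_drop]
    have : (l.take i).sum + ((l.take j).drop i).sum ≡ (l.take i).sum + 0 [MOD d] := by
      rw [← hsplit, add_zero]
      exact hmod.symm
    exact Nat.modEq_zero_iff_dvd.mp (Nat.ModEq.add_left_cancel' _ this)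

end List

namespace Multiset

theorem exists_le_card_le_dvd_sum {d : ℕ} (hd : 0 < d) {m : Multiset ℕ}
    (hm : d ≤ card m) : ∃ m' ≤ m, m' ≠ 0 ∧ card m' ≤ d ∧ d ∣ m'.sum := by
  induction m using Quotient.inductionOn with
  | h l =>
    obtain ⟨l', hsub, hne, hlen, hdvd⟩ := List.exists_sublist_length_le_dvd_sum hd hm
    exact ⟨l', coe_le.mpr hsub.subperm, by simpa using hne, hlen, by simpa using hdvd⟩

section Pad

variable {α : Type*}

theorem sup_mem_of_ne_zero [LinearOrder α] [OrderBot α] {m : Multiset α} (hm : m ≠ 0) :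
    m.sup ∈ m := by
  classical
  obtain ⟨a, ha, heq⟩ := Finset.exists_mem_eq_sup m.toFinset (toFinset_nonempty.mpr hm) id
  rw [← sup_dedup, ← toFinset_val, ← map_id (toFinset m).val, ← Finset.sup_def, heq]
  exact mem_toFinset.mp ha

variable [SemilatticeSup α] [OrderBot α]

def padWithSup (m : Multiset α) (d : ℕ) : Multiset α :=
  m + replicate (d - card m) m.sup

theorem card_padWithSup {m : Multiset α} {d : ℕ} (h : card m ≤ d) :
    card (padWithSup m d) = d := by
  simp only [padWithSup, card_add, card_replicate]
  omega

theorem mem_padWithSup {m : Multiset α} {d : ℕ} {a : α} (ha : a ∈ padWithSup m d) :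
    a ∈ m ∨ a = m.sup :=
  (mem_add.mp ha).imp id eq_of_mem_replicate

theorem sup_padWithSup (m : Multiset α) (d : ℕ) : (padWithSup m d).sup = m.sup := by
  rw [padWithSup, sup_add, sup_eq_left]
  exact Multiset.sup_le.mpr fun _ h => (eq_of_mem_replicate h).le

theorem le_or_le_of_padWithSup_eq {m m' : Multiset α} {d : ℕ}
    (h : padWithSup m d = padWithSup m' d) : m ≤ m' ∨ m' ≤ m := by
  wlog hk : d - card m ≤ d - card m' generalizing m m'
  · exact (this h.symm (by omega)).symm
  have hsup : m.sup = m'.sup := by rw [← sup_padWithSup m d, h, sup_padWithSup]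
  rw [padWithSup, padWithSup, ← hsup, ← Nat.add_sub_of_le hk, replicate_add, ← add_assoc,
    add_right_comm, add_left_inj] at h
  exact Or.inr (le_iff_exists_add.mpr ⟨_, h⟩)

end Pad

theorem setOf_card_eq_forall_mem_eq_range {α : Type*} (G : Set α) (d : ℕ) :
    {m : Multiset α | card m = d ∧ ∀ a ∈ m, a ∈ G} =
      Set.range fun s : Sym G d => ((s.map Subtype.val : Sym α d) : Multiset α) := by
  ext m
  constructor
  · rintro ⟨hcard, hmem⟩
    lift m to Multiset G using hmem
    exact ⟨⟨m, by simpa using hcard⟩, by simp⟩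
  · rintro ⟨s, rfl⟩
    refine ⟨by simp, fun a ha => ?_⟩
    dsimp only at ha
    rw [Sym.coe_map, mem_map] at ha
    obtain ⟨b, -, rfl⟩ := ha
    exact b.2

theorem ncard_setOf_card_eq_forall_mem {α : Type*} (G : Set α) (d : ℕ) :
    {m : Multiset α | card m = d ∧ ∀ a ∈ m, a ∈ G}.ncard = (G.ncard + d - 1).choose d := by
  rw [setOf_card_eq_forall_mem_eq_range, Set.ncard_range_of_injective
    fun _ _ h => Sym.map_injective Subtype.val_injective d (Sym.coe_injective h),
    Sym.natCard_sym_eq_choose, Nat.card_coe_set_eq]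

theorem finite_setOf_card_eq_forall_mem {α : Type*} {G : Set α} (hG : G.Finite) (d : ℕ) :
    {m : Multiset α | card m = d ∧ ∀ a ∈ m, a ∈ G}.Finite := by
  have := hG.to_subtype
  rw [setOf_card_eq_forall_mem_eq_range]
  exact Set.finite_range _

end Multiset

theorem exists_multiset_minGens_sum_eq {T : Set ℕ} {n : ℕ} (hn : n ∈ T) :
    ∃ m : Multiset ℕ, (∀ g ∈ m, g ∈ minGens T) ∧ m.sum = n := by
  induction n using Nat.strong_induction_on with
  | _ n ih =>
    by_cases hmin : n ∈ minGens T
    · exact ⟨{n}, by simpa using hmin, by simp⟩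
    obtain rfl | hn0 := eq_or_ne n 0
    · exact ⟨0, by simp, by simp⟩
    obtain ⟨a, b, ha, hb, ha0, hb0, rfl⟩ :
        ∃ a b, a ∈ T ∧ b ∈ T ∧ a ≠ 0 ∧ b ≠ 0 ∧ n = a + b := by
      by_contra! h
      exact hmin ⟨hn, hn0, h⟩
    obtain ⟨ma, hma, rfl⟩ := ih a (by omega) ha
    obtain ⟨mb, hmb, rfl⟩ := ih _ (by omega) hb
    refine ⟨ma + mb, fun g hg => ?_, Multiset.sum_add ma mb⟩
    exact (Multiset.mem_add.mp hg).elim (hma g) (hmb g)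

theorem eq_zero_of_sum_eq_zero_of_forall_mem_minGens {T : Set ℕ} {m : Multiset ℕ}
    (hm : ∀ g ∈ m, g ∈ minGens T) (h : m.sum = 0) : m = 0 :=
  Multiset.eq_zero_of_forall_notMem fun g hg =>
    (hm g hg).2.1 (Multiset.sum_eq_zero_iff.mp h g hg)

theorem finite_minGens {T : Set ℕ} (hT : {n : ℕ | n ∉ T}.Finite) : (minGens T).Finite := by
  obtain ⟨N, hN⟩ := hT.bddAbove
  have hmem : ∀ n, N < n → n ∈ T := fun n hn => by
    by_contra h
    exact absurd (hN h) (by omega)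
  refine (Set.finite_Iio (2 * N + 2)).subset fun x ⟨_, _, hirr⟩ => ?_
  rw [Set.mem_Iio]
  by_contra! hx
  exact hirr (N + 1) (x - (N + 1)) (hmem _ (by omega)) (hmem _ (by omega)) (by omega)
    (by omega) (by omega)

section DivSemigroup

variable {S : AddSubmonoid ℕ} {d x : ℕ}

theorem eq_zero_or_eq_of_le_of_dvd_sum (hd : 0 < d) (hx : x ∈ minGens {x : ℕ | d * x ∈ S})
    {m m' : Multiset ℕ} (hm : ∀ g ∈ m, g ∈ minGens (S : Set ℕ)) (hsum : m.sum = d * x)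
    (hle : m' ≤ m) (hdvd : d ∣ m'.sum) : m' = 0 ∨ m' = m := by
  have hm' : ∀ g ∈ m', g ∈ minGens (S : Set ℕ) := fun g hg => hm g (Multiset.mem_of_le hle hg)
  have hrest : ∀ g ∈ m - m', g ∈ minGens (S : Set ℕ) :=
    fun g hg => hm g (Multiset.mem_of_le tsub_le_self hg)
  have hsplit : m'.sum + (m - m').sum = d * x := by
    rw [← Multiset.sum_add, add_tsub_cancel_of_le hle, hsum]
  obtain ⟨y, hy⟩ := hdvd
  have hyx : y ≤ x := Nat.le_of_mul_le_mul_left (by rw [← hy]; omega) hd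
  have hz : (m - m').sum = d * (x - y) := by rw [Nat.mul_sub]; omega
  have hsum_mem : ∀ m₀ : Multiset ℕ, (∀ g ∈ m₀, g ∈ minGens (S : Set ℕ)) → m₀.sum ∈ S :=
    fun m₀ h => AddSubmonoid.multiset_sum_mem S m₀ fun g hg => (h g hg).1
  by_contra! hne
  refine hx.2.2 y (x - y) (show d * y ∈ S from hy ▸ hsum_mem m' hm')
    (show d * (x - y) ∈ S from hz ▸ hsum_mem _ hrest) ?_ ?_ (by omega)
  · rintro rfl
    exact hne.1 (eq_zero_of_sum_eq_zero_of_forall_mem_minGens hm' (by simpa using hy))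
  · intro h
    rw [h, mul_zero] at hz
    exact hne.2 (le_antisymm hle (tsub_eq_zero_iff_le.mp
      (eq_zero_of_sum_eq_zero_of_forall_mem_minGens hrest hz)))

theorem exists_multiset_minGens_card_le (hd : 0 < d) (hx : x ∈ minGens {x : ℕ | d * x ∈ S}) :
    ∃ m : Multiset ℕ, (∀ g ∈ m, g ∈ minGens (S : Set ℕ)) ∧ Multiset.card m ≤ d ∧
      m.sum = d * x := by
  obtain ⟨m, hm, hsum⟩ := exists_multiset_minGens_sum_eq (T := S) hx.1
  refine ⟨m, hm, ?_, hsum⟩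
  by_contra! hcard
  obtain ⟨m', hle, hne, hcard', hdvd⟩ := Multiset.exists_le_card_le_dvd_sum hd hcard.le
  obtain h | rfl := eq_zero_or_eq_of_le_of_dvd_sum hd hx hm hsum hle hdvd
  · exact hne h
  · omega

theorem eq_of_multiset_minGens_le (hd : 0 < d) {x' : ℕ}
    (hx : x ∈ minGens {x : ℕ | d * x ∈ S}) (hx' : x' ∈ minGens {x : ℕ | d * x ∈ S})
    {m m' : Multiset ℕ} (hsum : m.sum = d * x)
    (hm' : ∀ g ∈ m', g ∈ minGens (S : Set ℕ)) (hsum' : m'.sum = d * x') (hle : m ≤ m') :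
    x = x' := by
  obtain rfl | rfl := eq_zero_or_eq_of_le_of_dvd_sum hd hx' hm' hsum' hle ⟨x, hsum⟩
  · simp only [Multiset.sum_zero, zero_eq_mul] at hsum
    exact absurd (hsum.resolve_left hd.ne') hx.2.1
  · exact Nat.eq_of_mul_eq_mul_left hd (hsum.symm.trans hsum')

end DivSemigroup

theorem stmt14 (S : AddSubmonoid ℕ) (hfin : {n : ℕ | n ∉ S}.Finite)
    (d : ℕ) (hd : 0 < d) :
    Set.ncard (minGens {x : ℕ | d * x ∈ S})
      ≤ Nat.choose (Set.ncard (minGens (S : Set ℕ)) + d - 1) d := by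
  choose! fac hfac hcard hsum using fun x (hx : x ∈ minGens {x : ℕ | d * x ∈ S}) =>
    exists_multiset_minGens_card_le hd hx
  rw [← Multiset.ncard_setOf_card_eq_forall_mem]
  refine Set.ncard_le_ncard_of_injOn (fun x => (fac x).padWithSup d) (fun x hx => ?_)
    (fun x hx x' hx' h => ?_) (Multiset.finite_setOf_card_eq_forall_mem (finite_minGens hfin) d)
  · have hne : fac x ≠ 0 := fun h0 => by
      have := hsum x hx
      simp [h0, hd.ne', hx.2.1] at this
    refine ⟨Multiset.card_padWithSup (hcard x hx), fun g hg => ?_⟩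
    obtain hg | rfl := Multiset.mem_padWithSup hg
    · exact hfac x hx g hg
    · exact hfac x hx _ (Multiset.sup_mem_of_ne_zero hne)
  · obtain hle | hle := Multiset.le_or_le_of_padWithSup_eq h
    · exact eq_of_multiset_minGens_le hd hx hx' (hsum x hx) (hfac x' hx') (hsum x' hx') hle
    · exact (eq_of_multiset_minGens_le hd hx' hx (hsum x' hx') (hfac x hx) (hsum x hx) hle).symm
end

section
/- Let n_1, n_2 be positive integers such that n_1, n_2, 3 are pairwise coprime, and S = ⟨n_1, n_2⟩. If n_1 + n_2 ≡ 0 (mod 3), then S/3 = ⟨n_1, n_2, (n_1+n_2)/3⟩. -/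
theorem stmt16 (n₁ n₂ : ℕ) (h₁ : 0 < n₁) (h₂ : 0 < n₂)
    (hc : Nat.Coprime n₁ n₂) (hc₁ : Nat.Coprime n₁ 3) (hc₂ : Nat.Coprime n₂ 3)
    (hmod : (n₁ + n₂) % 3 = 0) :
    {x : ℕ | 3 * x ∈ AddSubmonoid.closure ({n₁, n₂} : Set ℕ)}
      = (AddSubmonoid.closure ({n₁, n₂, (n₁ + n₂) / 3} : Set ℕ) : Set ℕ) := by
  have h3 : 3 ∣ n₁ + n₂ := Nat.dvd_of_mod_eq_zero hmod
  set m := (n₁ + n₂) / 3 with hm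
  have hm3 : 3 * m = n₁ + n₂ := Nat.mul_div_cancel' h3
  have memmul : ∀ (c y : ℕ), y ∈ ({n₁, n₂, m} : Set ℕ) →
      c * y ∈ AddSubmonoid.closure ({n₁, n₂, m} : Set ℕ) := by
    intro c y hy
    simpa [nsmul_eq_mul] using
      nsmul_mem (AddSubmonoid.subset_closure hy) c
  ext x
  simp only [Set.mem_setOf_eq, SetLike.mem_coe]
  constructor
  · intro hx
    rw [AddSubmonoid.mem_closure_pair] at hx
    obtain ⟨a, b, hab⟩ := hx
    simp only [smul_eq_mul] at hab
    have hab' : (a : ℤ) * n₁ + b * n₂ = 3 * x := by exact_mod_cast hab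
    have h3' : (3 : ℤ) ∣ (n₁ : ℤ) + n₂ := by exact_mod_cast h3
    have hdvd : (3 : ℤ) ∣ ((a : ℤ) - b) * n₁ := by
      have h1 : (3 : ℤ) ∣ (a : ℤ) * n₁ + b * n₂ := ⟨x, hab'.symm ▸ rfl⟩
      have h2 : (3 : ℤ) ∣ (b : ℤ) * ((n₁ : ℤ) + n₂) := Dvd.dvd.mul_left h3' _
      have : ((a : ℤ) - b) * n₁ = ((a : ℤ) * n₁ + b * n₂) - b * ((n₁ : ℤ) + n₂) := by
        ring
      rw [this]
      exact dvd_sub h1 h2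
    have hcop : IsCoprime (3 : ℤ) (n₁ : ℤ) := by
      have := (Nat.isCoprime_iff_coprime (m := 3) (n := n₁)).mpr hc₁.symm
      exact_mod_cast this
    have key : (3 : ℤ) ∣ (a : ℤ) - b := hcop.dvd_of_dvd_mul_right hdvd
    obtain ⟨k, hk⟩ := key
    rcases le_or_gt b a with hba | hba
    · set k' := k.toNat with hk'
      have ha : a = b + 3 * k' := by omega
      have h9 : 3 * x = 3 * (b * m + k' * n₁) := by
        calc 3 * x = a * n₁ + b * n₂ := hab.symm
          _ = (b + 3 * k') * n₁ + b * n₂ := by rw [ha]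
          _ = b * (n₁ + n₂) + 3 * (k' * n₁) := by ring
          _ = b * (3 * m) + 3 * (k' * n₁) := by rw [hm3]
          _ = 3 * (b * m + k' * n₁) := by ring
      have hx : x = b * m + k' * n₁ := by omega
      rw [hx]
      exact add_mem (memmul b m (by simp)) (memmul k' n₁ (by simp))
    · set k' := (-k).toNat with hk'
      have hb : b = a + 3 * k' := by omega
      have h9 : 3 * x = 3 * (a * m + k' * n₂) := by
        calc 3 * x = a * n₁ + b * n₂ := hab.symm
          _ = a * n₁ + (a + 3 * k') * n₂ := by rw [hb]
          _ = a * (n₁ + n₂) + 3 * (k' * n₂) := by ring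
          _ = a * (3 * m) + 3 * (k' * n₂) := by rw [hm3]
          _ = 3 * (a * m + k' * n₂) := by ring
      have hx : x = a * m + k' * n₂ := by omega
      rw [hx]
      exact add_mem (memmul a m (by simp)) (memmul k' n₂ (by simp))
  · intro hx
    let T : AddSubmonoid ℕ :=
      { carrier := {x | 3 * x ∈ AddSubmonoid.closure ({n₁, n₂} : Set ℕ)}
        zero_mem' := by
          simp only [Set.mem_setOf_eq, mul_zero]
          exact zero_mem _
        add_mem' := fun {p q} hp hq => by
          simpa [mul_add] using add_mem hp hq }
    have hle : AddSubmonoid.closure ({n₁, n₂, m} : Set ℕ) ≤ T := by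
      apply AddSubmonoid.closure_le.mpr
      intro y hy
      have memmul2 : ∀ (c z : ℕ), z ∈ ({n₁, n₂} : Set ℕ) →
          c * z ∈ AddSubmonoid.closure ({n₁, n₂} : Set ℕ) := by
        intro c z hz
        simpa [nsmul_eq_mul] using
          nsmul_mem (AddSubmonoid.subset_closure hz) c
      show 3 * y ∈ AddSubmonoid.closure ({n₁, n₂} : Set ℕ)
      rcases hy with h | h | h
      · rw [h]; exact memmul2 3 n₁ (by simp)
      · rw [h]; exact memmul2 3 n₂ (by simp)
      · rw [h, hm3]
        exact add_mem (AddSubmonoid.subset_closure (by simp))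
          (AddSubmonoid.subset_closure (by simp))
    exact hle hx
end

section
/- Let n_1, n_2 be positive integers such that n_1, n_2, 3 are pairwise coprime, and S = ⟨n_1, n_2⟩. If n_1 + 2n_2 ≡ 0 (mod 3), then S/3 = ⟨n_1, n_2, (n_1+2n_2)/3, (2n_1+n_2)/3⟩. -/
theorem stmt17 (n₁ n₂ : ℕ) (h₁ : 0 < n₁) (h₂ : 0 < n₂)
    (hc : Nat.Coprime n₁ n₂) (hc₁ : Nat.Coprime n₁ 3) (hc₂ : Nat.Coprime n₂ 3)
    (hmod : (n₁ + 2 * n₂) % 3 = 0) :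
    {x : ℕ | 3 * x ∈ AddSubmonoid.closure ({n₁, n₂} : Set ℕ)}
      = (AddSubmonoid.closure
          ({n₁, n₂, (n₁ + 2 * n₂) / 3, (2 * n₁ + n₂) / 3} : Set ℕ) : Set ℕ) := by
  have h3 : (3:ℕ) ∣ n₁ + 2 * n₂ := Nat.dvd_of_mod_eq_zero hmod
  have h3' : (3:ℕ) ∣ 2 * n₁ + n₂ := by omega
  have hmem : ∀ k g : ℕ, g ∈ AddSubmonoid.closure ({n₁, n₂, (n₁ + 2 * n₂) / 3, (2 * n₁ + n₂) / 3} : Set ℕ) →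
      k * g ∈ AddSubmonoid.closure ({n₁, n₂, (n₁ + 2 * n₂) / 3, (2 * n₁ + n₂) / 3} : Set ℕ) := by
    intro k g hg
    simpa [smul_eq_mul] using AddSubmonoid.nsmul_mem _ hg k
  ext x
  simp only [Set.mem_setOf_eq, SetLike.mem_coe]
  constructor
  · intro hx
    rw [AddSubmonoid.mem_closure_pair] at hx
    obtain ⟨a, b, hab⟩ := hx
    simp only [smul_eq_mul] at hab
    have hmod2 : 3 ∣ (a + b) * n₁ := by
      have hmm : (a + b) * n₁ ≡ a * n₁ + b * n₂ [MOD 3] := by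
        have hn : n₁ ≡ n₂ [MOD 3] := by unfold Nat.ModEq; omega
        calc (a + b) * n₁ = a * n₁ + b * n₁ := by ring
        _ ≡ a * n₁ + b * n₂ [MOD 3] := Nat.ModEq.add_left _ (Nat.ModEq.mul_left _ hn)
      have h0 : 3 ∣ a * n₁ + b * n₂ := ⟨x, hab⟩
      exact (Nat.modEq_zero_iff_dvd.mp (hmm.trans (Nat.modEq_zero_iff_dvd.mpr h0)))
    have hab3 : (a + b) % 3 = 0 := by
      have := (Nat.Coprime.dvd_of_dvd_mul_right (Nat.coprime_comm.mp hc₁) hmod2)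
      omega
    have hg3 : (n₁ + 2 * n₂) / 3 ∈ AddSubmonoid.closure ({n₁, n₂, (n₁ + 2 * n₂) / 3, (2 * n₁ + n₂) / 3} : Set ℕ) :=
      AddSubmonoid.subset_closure (by simp)
    have hg4 : (2 * n₁ + n₂) / 3 ∈ AddSubmonoid.closure ({n₁, n₂, (n₁ + 2 * n₂) / 3, (2 * n₁ + n₂) / 3} : Set ℕ) :=
      AddSubmonoid.subset_closure (by simp)
    have hg1 : n₁ ∈ AddSubmonoid.closure ({n₁, n₂, (n₁ + 2 * n₂) / 3, (2 * n₁ + n₂) / 3} : Set ℕ) :=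
      AddSubmonoid.subset_closure (by simp)
    have hg2 : n₂ ∈ AddSubmonoid.closure ({n₁, n₂, (n₁ + 2 * n₂) / 3, (2 * n₁ + n₂) / 3} : Set ℕ) :=
      AddSubmonoid.subset_closure (by simp)
    rcases (by omega : a % 3 = 0 ∧ b % 3 = 0 ∨ a % 3 = 1 ∧ b % 3 = 2 ∨ a % 3 = 2 ∧ b % 3 = 1) with
      ⟨ha, hb⟩ | ⟨ha, hb⟩ | ⟨ha, hb⟩
    · obtain ⟨a', rfl⟩ : ∃ a', a = 3 * a' := ⟨a / 3, by omega⟩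
      obtain ⟨b', rfl⟩ : ∃ b', b = 3 * b' := ⟨b / 3, by omega⟩
      have hab' : 3 * (a' * n₁ + b' * n₂) = 3 * x := by rw [← hab]; ring
      have hx : x = a' * n₁ + b' * n₂ := by omega
      rw [hx]; exact add_mem (hmem _ _ hg1) (hmem _ _ hg2)
    · obtain ⟨a', rfl⟩ : ∃ a', a = 3 * a' + 1 := ⟨a / 3, by omega⟩
      obtain ⟨b', rfl⟩ : ∃ b', b = 3 * b' + 2 := ⟨b / 3, by omega⟩
      have hab' : 3 * (a' * n₁ + b' * n₂) + (n₁ + 2 * n₂) = 3 * x := by rw [← hab]; ring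
      have hx : x = a' * n₁ + b' * n₂ + (n₁ + 2 * n₂) / 3 := by omega
      rw [hx]; exact add_mem (add_mem (hmem _ _ hg1) (hmem _ _ hg2)) hg3
    · obtain ⟨a', rfl⟩ : ∃ a', a = 3 * a' + 2 := ⟨a / 3, by omega⟩
      obtain ⟨b', rfl⟩ : ∃ b', b = 3 * b' + 1 := ⟨b / 3, by omega⟩
      have hab' : 3 * (a' * n₁ + b' * n₂) + (2 * n₁ + n₂) = 3 * x := by rw [← hab]; ring
      have hx : x = a' * n₁ + b' * n₂ + (2 * n₁ + n₂) / 3 := by omega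
      rw [hx]; exact add_mem (add_mem (hmem _ _ hg1) (hmem _ _ hg2)) hg4
  · intro hx
    have hle : AddSubmonoid.closure ({n₁, n₂, (n₁ + 2 * n₂) / 3, (2 * n₁ + n₂) / 3} : Set ℕ)
        ≤ (AddSubmonoid.closure ({n₁, n₂} : Set ℕ)).comap (AddMonoidHom.mulLeft 3) := by
      rw [AddSubmonoid.closure_le]
      rintro g (rfl | rfl | rfl | rfl) <;>
        refine AddSubmonoid.mem_comap.mpr ?_ <;>
        rw [AddSubmonoid.mem_closure_pair]
      · exact ⟨3, 0, by simp [AddMonoidHom.coe_mulLeft, smul_eq_mul]⟩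
      · exact ⟨0, 3, by simp [AddMonoidHom.coe_mulLeft, smul_eq_mul]⟩
      · exact ⟨1, 2, by simp only [AddMonoidHom.coe_mulLeft, smul_eq_mul]; omega⟩
      · exact ⟨2, 1, by simp only [AddMonoidHom.coe_mulLeft, smul_eq_mul]; omega⟩
    exact hle hx
end

section
/- Let S be a numerical semigroup whose Frobenius number F(S) is odd. Then T := S ∪ {x ∈ ℕ \ {0} : x ≥ F(S)/2 and F(S) − x ∉ S} is a symmetric numerical semigroup with F(T) = F(S). -/
theorem stmt18 (S : AddSubmonoid ℕ) (hfin : {n : ℕ | n ∉ S}.Finite)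
    (hne : {n : ℕ | n ∉ S}.Nonempty)
    (F : ℕ) (hF : F = sSup {n : ℕ | n ∉ S}) (hodd : Odd F) :
    ∀ T : Set ℕ,
      T = (S : Set ℕ) ∪ {x : ℕ | x ≠ 0 ∧ F ≤ 2 * x ∧ ∀ s ∈ S, x + s ≠ F} →
      (0 ∈ T) ∧ (∀ a ∈ T, ∀ b ∈ T, a + b ∈ T) ∧ {n : ℕ | n ∉ T}.Finite ∧
        sSup {n : ℕ | n ∉ T} = F ∧
        (∀ z : ℤ, (∃ t ∈ T, (t : ℤ) = z) ∨ (∃ t ∈ T, (t : ℤ) = (F : ℤ) - z)) := by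
  intro T hT
  have hFS : F ∉ S := by
    have := hne.csSup_mem hfin
    rw [← hF] at this
    exact this
  have hgt : ∀ n : ℕ, F < n → n ∈ S := by
    intro n hn
    by_contra h
    have : n ≤ F := hF ▸ le_csSup hfin.bddAbove h
    omega
  have hsub : (S : Set ℕ) ⊆ T := by rw [hT]; exact Set.subset_union_left
  have h0T : (0 : ℕ) ∈ T := hsub S.zero_mem
  have hclosed : ∀ a ∈ T, ∀ b ∈ T, a + b ∈ T := by
    intro a ha b hb
    rw [hT] at ha hb ⊢
    rcases ha with ha | ⟨ha0, ha2, haF⟩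
    · rcases hb with hb | ⟨hb0, hb2, hbF⟩
      · exact Or.inl (S.add_mem ha hb)
      · by_cases hab : a + b ∈ (S : Set ℕ)
        · exact Or.inl hab
        · right
          refine ⟨by omega, by omega, ?_⟩
          intro s hs heq
          exact hbF (a + s) (S.add_mem ha hs) (by omega)
    · rcases hb with hb | ⟨hb0, hb2, hbF⟩
      · by_cases hab : a + b ∈ (S : Set ℕ)
        · exact Or.inl hab
        · right
          refine ⟨by omega, by omega, ?_⟩
          intro s hs heq
          exact haF (b + s) (S.add_mem hb hs) (by omega)
      · left
        apply hgt
        obtain ⟨k, hk⟩ := hodd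
        omega
  have hFT : F ∉ T := by
    rw [hT]
    rintro (h | ⟨h0, h2, hF'⟩)
    · exact hFS h
    · exact hF' 0 S.zero_mem (by omega)
  have hTfin : {n : ℕ | n ∉ T}.Finite :=
    hfin.subset (fun n hn => fun hnS => hn (hsub hnS))
  have hTsup : sSup {n : ℕ | n ∉ T} = F := by
    apply le_antisymm
    · apply csSup_le ⟨F, hFT⟩
      intro n hn
      by_contra h
      exact hn (hsub (hgt n (by omega)))
    · exact le_csSup hTfin.bddAbove hFT
  refine ⟨h0T, hclosed, hTfin, hTsup, ?_⟩
  have key : ∀ x : ℕ, x ∈ T ∨ ∃ t ∈ T, t + x = F := by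
    intro x
    by_cases hx : x ∈ T
    · exact Or.inl hx
    right
    rw [hT] at hx
    simp only [Set.mem_union, Set.mem_setOf_eq, not_or, SetLike.mem_coe] at hx
    push_neg at hx
    obtain ⟨hxS, hx2⟩ := hx
    have hx0 : x ≠ 0 := fun h => hxS (h ▸ S.zero_mem)
    rcases le_or_gt F (2 * x) with h2 | h2
    · obtain ⟨s, hs, hseq⟩ := hx2 hx0 h2
      exact ⟨s, hsub hs, by omega⟩
    · refine ⟨F - x, ?_, by omega⟩
      rw [hT]
      right
      refine ⟨by omega, by omega, ?_⟩
      intro s hs heq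
      have : s = x := by omega
      exact hxS (this ▸ hs)
  intro z
  rcases lt_or_ge z 0 with hz | hz
  · right
    refine ⟨F + (-z).toNat, hsub (hgt _ (by omega)), ?_⟩
    have := Int.toNat_of_nonneg (by omega : (0:ℤ) ≤ -z)
    push_cast
    omega
  · obtain ⟨x, rfl⟩ := Int.eq_ofNat_of_zero_le hz
    rcases key x with h | ⟨t, ht, hteq⟩
    · exact Or.inl ⟨x, h, rfl⟩
    · right
      exact ⟨t, ht, by omega⟩
end

section
/- Let S be a numerical semigroup and d ≥ 2 an integer. Then there exist infinitely many symmetric numerical semigroups T such that S = T/d. -/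
/-- The membership predicate (on integers) of the symmetric semigroup `T_ρ` built from
`d·S`: multiples of `d` belong iff they are in `d·S`; integers `z ≡ ρ (mod d)` belong iff
`ρ - z ∉ d·S`; all other residues belong iff `2z > ρ`. -/
def myQ (S : AddSubmonoid ℕ) (d ρ : ℕ) (z : ℤ) : Prop :=
  (∃ s ∈ S, z = (d : ℤ) * s) ∨
  ((¬ (d:ℤ) ∣ z) ∧ ((d:ℤ) ∣ ((ρ:ℤ) - z)) ∧ ¬ ∃ s ∈ S, (ρ:ℤ) - z = (d:ℤ) * s) ∨
  ((¬ (d:ℤ) ∣ z) ∧ (¬ (d:ℤ) ∣ ((ρ:ℤ) - z)) ∧ (ρ:ℤ) < 2 * z)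

lemma myQ_zero (S : AddSubmonoid ℕ) (d ρ : ℕ) : myQ S d ρ 0 :=
  Or.inl ⟨0, S.zero_mem, by simp⟩

lemma B_half {S : AddSubmonoid ℕ} {d ρ F : ℕ} (hd : 2 ≤ d)
    (hF : ∀ x : ℕ, F < x → x ∈ S) (hρbig : 2*d*F < ρ) {z : ℤ}
    (h2 : (d:ℤ) ∣ ((ρ:ℤ) - z)) (h3 : ¬ ∃ s ∈ S, (ρ:ℤ) - z = (d:ℤ) * s) :
    (ρ:ℤ) < 2 * z := by
  have hd' : (2:ℤ) ≤ (d:ℤ) := by exact_mod_cast hd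
  rcases lt_or_ge ((ρ:ℤ) - z) 0 with hn | hp
  · have : (0:ℤ) ≤ (ρ:ℤ) := Int.ofNat_nonneg ρ
    linarith
  · obtain ⟨x, hx⟩ := h2
    have hx0 : 0 ≤ x := by nlinarith
    lift x to ℕ using hx0
    have hxS : x ∉ S := fun hs => h3 ⟨x, hs, hx⟩
    have hxF : x ≤ F := by
      by_contra hc; push_neg at hc; exact hxS (hF x hc)
    have h1 : (d:ℤ) * (x:ℤ) ≤ (d:ℤ) * (F:ℤ) := by
      have := Nat.mul_le_mul_left d hxF; exact_mod_cast this
    have h2' : ((2*d*F : ℕ) : ℤ) < (ρ:ℤ) := by exact_mod_cast hρbig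
    push_cast at h2'
    linarith

lemma myQ_nonneg {S : AddSubmonoid ℕ} {d ρ F : ℕ} (hd : 2 ≤ d)
    (hF : ∀ x : ℕ, F < x → x ∈ S) (hρbig : 2*d*F < ρ) {z : ℤ}
    (h : myQ S d ρ z) : 0 ≤ z := by
  have hρ0 : (0:ℤ) ≤ (ρ:ℤ) := Int.ofNat_nonneg ρ
  rcases h with ⟨s, _, rfl⟩ | ⟨_, h2, h3⟩ | ⟨_, _, h3⟩
  · positivity
  · have := B_half hd hF hρbig h2 h3; linarith
  · linarith

lemma exists_dS {S : AddSubmonoid ℕ} {d ρ F : ℕ} (hd : 2 ≤ d)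
    (hF : ∀ x : ℕ, F < x → x ∈ S) (hρbig : 2*d*F < ρ) {z : ℤ}
    (hz : (ρ:ℤ) < z) (hdvd : (d:ℤ) ∣ z) : ∃ s ∈ S, z = (d:ℤ) * s := by
  have hd' : (2:ℤ) ≤ (d:ℤ) := by exact_mod_cast hd
  have hρ0 : (0:ℤ) ≤ (ρ:ℤ) := Int.ofNat_nonneg ρ
  obtain ⟨x, rfl⟩ := hdvd
  have hx0 : 0 ≤ x := by nlinarith
  lift x to ℕ using hx0
  refine ⟨x, hF x ?_, rfl⟩
  by_contra hc
  push_neg at hc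
  have h1 : (d:ℤ) * (x:ℤ) ≤ (d:ℤ) * (F:ℤ) := by
    have := Nat.mul_le_mul_left d hc; exact_mod_cast this
  have h2' : ((2*d*F : ℕ) : ℤ) < (ρ:ℤ) := by exact_mod_cast hρbig
  push_cast at h2'
  linarith

lemma myQ_big {S : AddSubmonoid ℕ} {d ρ F : ℕ} (hd : 2 ≤ d)
    (hF : ∀ x : ℕ, F < x → x ∈ S) (hρbig : 2*d*F < ρ) {z : ℤ}
    (hz : (ρ:ℤ) < z) : myQ S d ρ z := by
  have hρ0 : (0:ℤ) ≤ (ρ:ℤ) := Int.ofNat_nonneg ρ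
  by_cases h1 : (d:ℤ) ∣ z
  · exact Or.inl (exists_dS hd hF hρbig hz h1)
  by_cases h2 : (d:ℤ) ∣ ((ρ:ℤ) - z)
  · refine Or.inr (Or.inl ⟨h1, h2, ?_⟩)
    rintro ⟨s, hs, heq⟩
    have hs0 : (0:ℤ) ≤ (d:ℤ) * (s:ℤ) := by positivity
    linarith
  · exact Or.inr (Or.inr ⟨h1, h2, by linarith⟩)

lemma myQ_add_A {S : AddSubmonoid ℕ} {d ρ : ℕ} {s : ℕ} (hs : s ∈ S) {b : ℤ}
    (hb : myQ S d ρ b) : myQ S d ρ ((d:ℤ) * s + b) := by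
  rcases hb with ⟨t, ht, rfl⟩ | ⟨h1, h2, h3⟩ | ⟨h1, h2, h3⟩
  · exact Or.inl ⟨s + t, S.add_mem hs ht, by push_cast; ring⟩
  · refine Or.inr (Or.inl ⟨?_, ?_, ?_⟩)
    · intro hdvd
      have : (d:ℤ) ∣ b := by
        have h := hdvd.sub (Dvd.intro (s:ℤ) rfl)
        simpa using h
      exact h1 this
    · have h : (ρ:ℤ) - ((d:ℤ)*s + b) = ((ρ:ℤ) - b) - (d:ℤ)*s := by ring
      rw [h]; exact h2.sub (Dvd.intro (s:ℤ) rfl)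
    · rintro ⟨t, ht, heq⟩
      refine h3 ⟨t + s, S.add_mem ht hs, ?_⟩
      push_cast
      linarith
  · refine Or.inr (Or.inr ⟨?_, ?_, ?_⟩)
    · intro hdvd
      have : (d:ℤ) ∣ b := by
        have h := hdvd.sub (Dvd.intro (s:ℤ) rfl)
        simpa using h
      exact h1 this
    · intro hdvd
      apply h2
      have h : (ρ:ℤ) - b = ((ρ:ℤ) - ((d:ℤ)*s + b)) + (d:ℤ)*s := by ring
      rw [h]; exact hdvd.add (Dvd.intro (s:ℤ) rfl)
    · have hs0 : (0:ℤ) ≤ (d:ℤ) * (s:ℤ) := by positivity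
      linarith

lemma myQ_add {S : AddSubmonoid ℕ} {d ρ F : ℕ} (hd : 2 ≤ d)
    (hF : ∀ x : ℕ, F < x → x ∈ S) (hρbig : 2*d*F < ρ) {a b : ℤ}
    (ha : myQ S d ρ a) (hb : myQ S d ρ b) : myQ S d ρ (a + b) := by
  have hρ0 : (0:ℤ) ≤ (ρ:ℤ) := Int.ofNat_nonneg ρ
  have half : ∀ {z : ℤ}, (¬ (d:ℤ) ∣ z ∧ (d:ℤ) ∣ ((ρ:ℤ) - z) ∧ ¬ ∃ s ∈ S, (ρ:ℤ) - z = (d:ℤ) * s) ∨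
      (¬ (d:ℤ) ∣ z ∧ ¬ (d:ℤ) ∣ ((ρ:ℤ) - z) ∧ (ρ:ℤ) < 2 * z) → (ρ:ℤ) < 2 * z := by
    rintro z (⟨_, h2, h3⟩ | ⟨_, _, h3⟩)
    · exact B_half hd hF hρbig h2 h3
    · exact h3
  rcases ha with ⟨s, hs, rfl⟩ | ha'
  · exact myQ_add_A hs hb
  rcases hb with ⟨t, ht, rfl⟩ | hb'
  · rw [add_comm]; exact myQ_add_A ht (Or.inr ha')
  have ha2 := half ha'
  have hb2 := half hb'
  exact myQ_big hd hF hρbig (by linarith)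

lemma myQ_not_rho {S : AddSubmonoid ℕ} {d ρ : ℕ} (hρd : ¬ (d:ℤ) ∣ (ρ:ℤ)) :
    ¬ myQ S d ρ (ρ:ℤ) := by
  rintro (⟨s, hs, heq⟩ | ⟨h1, h2, h3⟩ | ⟨h1, h2, h3⟩)
  · exact hρd ⟨s, heq⟩
  · exact h3 ⟨0, S.zero_mem, by simp⟩
  · exact h2 (by simp)

lemma myQ_symm {S : AddSubmonoid ℕ} {d ρ F : ℕ} (hd : 2 ≤ d)
    (hF : ∀ x : ℕ, F < x → x ∈ S) (hρd : ¬ (d:ℤ) ∣ (ρ:ℤ)) (hρodd : Odd ρ)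
    (hρbig : 2*d*F < ρ) (z : ℤ) : myQ S d ρ z ∨ myQ S d ρ ((ρ:ℤ) - z) := by
  have hzz : (ρ:ℤ) - ((ρ:ℤ) - z) = z := by ring
  by_cases h1 : (d:ℤ) ∣ z
  · by_cases hA : ∃ s ∈ S, z = (d:ℤ) * s
    · exact Or.inl (Or.inl hA)
    · refine Or.inr (Or.inr (Or.inl ⟨?_, ?_, ?_⟩))
      · intro hdvd
        exact hρd (by simpa using hdvd.add h1)
      · rw [hzz]; exact h1
      · rw [hzz]
        rintro ⟨s, hs, heq⟩
        exact hA ⟨s, hs, heq⟩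
  · by_cases h2 : (d:ℤ) ∣ ((ρ:ℤ) - z)
    · by_cases hA : ∃ s ∈ S, (ρ:ℤ) - z = (d:ℤ) * s
      · obtain ⟨s, hs, heq⟩ := hA
        exact Or.inr (Or.inl ⟨s, hs, heq⟩)
      · exact Or.inl (Or.inr (Or.inl ⟨h1, h2, hA⟩))
    · rcases lt_trichotomy (2*z) (ρ:ℤ) with hlt | heq | hgt
      · refine Or.inr (Or.inr (Or.inr ⟨h2, ?_, by linarith⟩))
        rw [hzz]; exact h1
      · exfalso
        obtain ⟨m, hm⟩ := hρodd
        omega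
      · exact Or.inl (Or.inr (Or.inr ⟨h1, h2, hgt⟩))

/-- The symmetric numerical semigroup with Frobenius number `ρ` whose quotient by `d` is `S`. -/
def myT (S : AddSubmonoid ℕ) (d ρ F : ℕ) (hd : 2 ≤ d)
    (hF : ∀ x : ℕ, F < x → x ∈ S) (hρbig : 2*d*F < ρ) : AddSubmonoid ℕ where
  carrier := {n : ℕ | myQ S d ρ (n:ℤ)}
  zero_mem' := by simpa using myQ_zero S d ρ
  add_mem' := by
    intro a b ha hb
    have := myQ_add hd hF hρbig ha hb
    simpa using this

lemma myT_mem {S : AddSubmonoid ℕ} {d ρ F : ℕ} {hd : 2 ≤ d}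
    {hF : ∀ x : ℕ, F < x → x ∈ S} {hρbig : 2*d*F < ρ} (n : ℕ) :
    n ∈ myT S d ρ F hd hF hρbig ↔ myQ S d ρ (n:ℤ) := Iff.rfl

lemma myT_gap_le {S : AddSubmonoid ℕ} {d ρ F : ℕ} {hd : 2 ≤ d}
    {hF : ∀ x : ℕ, F < x → x ∈ S} {hρbig : 2*d*F < ρ} {n : ℕ}
    (hn : n ∉ myT S d ρ F hd hF hρbig) : n ≤ ρ := by
  by_contra hc
  push_neg at hc
  exact hn (myQ_big hd hF hρbig (by exact_mod_cast hc))

lemma myT_sSup {S : AddSubmonoid ℕ} {d ρ F : ℕ} (hd : 2 ≤ d)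
    (hF : ∀ x : ℕ, F < x → x ∈ S) (hρd : ¬ (d:ℤ) ∣ (ρ:ℤ)) (hρbig : 2*d*F < ρ) :
    sSup {n : ℕ | n ∉ myT S d ρ F hd hF hρbig} = ρ := by
  have hmem : ρ ∈ {n : ℕ | n ∉ myT S d ρ F hd hF hρbig} := myQ_not_rho hρd
  have hub : ∀ n ∈ {n : ℕ | n ∉ myT S d ρ F hd hF hρbig}, n ≤ ρ := fun n hn => myT_gap_le hn
  exact le_antisymm (csSup_le ⟨ρ, hmem⟩ hub) (le_csSup ⟨ρ, hub⟩ hmem)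

theorem stmt19 (S : AddSubmonoid ℕ) (hfin : {n : ℕ | n ∉ S}.Finite)
    (d : ℕ) (hd : 2 ≤ d) :
    {T : AddSubmonoid ℕ | {n : ℕ | n ∉ T}.Finite ∧
        (∀ z : ℤ, (∃ t ∈ T, (t : ℤ) = z) ∨
          (∃ t ∈ T, (t : ℤ) = ((sSup {n : ℕ | n ∉ T} : ℕ) : ℤ) - z)) ∧
        {x : ℕ | d * x ∈ T} = (S : Set ℕ)}.Infinite := by
  set F := sSup {n : ℕ | n ∉ S} with hFdef
  have hF : ∀ x : ℕ, F < x → x ∈ S := by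
    intro x hx
    by_contra h
    exact absurd (le_csSup hfin.bddAbove h) (not_le.mpr hx)
  have hd' : (2:ℤ) ≤ (d:ℤ) := by exact_mod_cast hd
  have hρbig : ∀ k : ℕ, 2*d*F < 2*d*(F+k+1)+1 := by
    intro k
    have h1 : 2*d*F ≤ 2*d*(F+k+1) := Nat.mul_le_mul_left _ (by omega)
    omega
  have hρd : ∀ k : ℕ, ¬ (d:ℤ) ∣ ((2*d*(F+k+1)+1 : ℕ):ℤ) := by
    intro k hdvd
    push_cast at hdvd
    have h2 : (d:ℤ) ∣ ((2:ℤ)*d*((F:ℤ)+k+1)) := ⟨2*((F:ℤ)+k+1), by ring⟩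
    have h1 : (d:ℤ) ∣ 1 := by
      have := hdvd.sub h2
      simpa using this
    have := Int.le_of_dvd one_pos h1
    linarith
  have hρodd : ∀ k : ℕ, Odd (2*d*(F+k+1)+1) := fun k => ⟨d*(F+k+1), by ring⟩
  apply Set.infinite_of_injective_forall_mem
    (f := fun k : ℕ => myT S d (2*d*(F+k+1)+1) F hd hF (hρbig k))
  · intro k k' hkk
    have h := congrArg (fun T : AddSubmonoid ℕ => sSup {n : ℕ | n ∉ T}) hkk
    simp only at h
    rw [myT_sSup hd hF (hρd k) (hρbig k), myT_sSup hd hF (hρd k') (hρbig k')] at h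
    have h2 : 2*d*(F+k+1) = 2*d*(F+k'+1) := by omega
    have h3 : F+k+1 = F+k'+1 := Nat.eq_of_mul_eq_mul_left (by omega) h2
    omega
  · intro k
    set ρ : ℕ := 2*d*(F+k+1)+1 with hρdef
    refine ⟨?_, ?_, ?_⟩
    · exact Set.Finite.subset (Set.finite_Iic ρ) (fun n hn => myT_gap_le hn)
    · intro z
      rw [myT_sSup hd hF (hρd k) (hρbig k)]
      rcases myQ_symm hd hF (hρd k) (hρodd k) (hρbig k) z with h | h
      · left
        have hz0 : 0 ≤ z := myQ_nonneg hd hF (hρbig k) h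
        refine ⟨z.toNat, ?_, Int.toNat_of_nonneg hz0⟩
        rw [myT_mem, Int.toNat_of_nonneg hz0]
        exact h
      · right
        have hz0 : 0 ≤ (ρ:ℤ) - z := myQ_nonneg hd hF (hρbig k) h
        refine ⟨((ρ:ℤ) - z).toNat, ?_, Int.toNat_of_nonneg hz0⟩
        rw [myT_mem, Int.toNat_of_nonneg hz0]
        exact h
    · ext x
      simp only [Set.mem_setOf_eq, SetLike.mem_coe, myT_mem]
      constructor
      · rintro (⟨s, hs, heq⟩ | ⟨h1, _, _⟩ | ⟨h1, _, _⟩)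
        · push_cast at heq
          have hdo : (d:ℤ) ≠ 0 := by linarith
          have : (x:ℤ) = (s:ℤ) := mul_left_cancel₀ hdo heq
          have : x = s := by exact_mod_cast this
          rwa [this]
        · exact absurd ⟨(x:ℤ), by push_cast; ring⟩ h1
        · exact absurd ⟨(x:ℤ), by push_cast; ring⟩ h1
      · intro hx
        exact Or.inl ⟨x, hx, by push_cast; ring⟩
end
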